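/- arXiv:1501.05929 — 2 statements merged into one kernel-verified Lean document; each statement's English description precedes it below -/
import Mathlib

section
/- For the product test function on a wreath product: let φ₁ on H₁ with support U₁ and φ₂ on H₂ be finitely supported functions, and define φ(η,x) = (∏_{y∈U₁} φ₂(η(y)))·φ₁(x)·1_W(η) on H₂ ≀ H₁ where W is the set of finitely supported configurations η: H₁ → H₂ with support in U₁. Then ‖φ‖_p^p = ‖φ₁‖_p^p · ‖φ₂‖_p^{p|U₁|}, the support of φ has size at most |U₁|·|support(φ₂)|^{|U₁|}, and E_{p,μ}(φ)/‖φ‖_p^p = (1/2)·(E_{p,μ₁}(φ₁)/‖φ₁‖_p^p + E_{p,μ₂}(φ₂)/‖φ₂‖_p^p) for μ = (1/2)(μ₁+μ₂). -/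
open scoped BigOperators

/-- A symmetric probability measure on a group. -/
def IsSymProb {G : Type*} [Group G] (φ : G → ℝ) : Prop :=
  (∀ x, 0 ≤ φ x) ∧ (∑' x, φ x) = 1 ∧ ∀ x, φ x⁻¹ = φ x

/-- The `L^p` isoperimetric profile. -/
noncomputable def lambdaP {G : Type*} [Group G] (p : ℝ) (φ : G → ℝ) (v : ℝ) : ℝ :=
  sInf {E : ℝ | ∃ f : G → ℝ, (Function.support f).Finite ∧
    ((Function.support f).ncard : ℝ) ≤ v ∧ (∑' x, |f x| ^ p) = 1 ∧
    E = (1 / 2) * ∑' x : G, ∑' y : G, |f (x * y) - f x| ^ p * φ y}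

/-- Right-continuous inverse of an isoperimetric profile. -/
noncomputable def invProfile (Λ : ℝ → ℝ) (s : ℝ) : ℝ :=
  sInf {v : ℝ | 0 ≤ v ∧ Λ v ≤ s}

section Wreath

variable (H₁ H₂ : Type*) [Group H₁] [Group H₂]

/-- The group of finitely supported configurations `⊕_{h ∈ H₁} H₂`, as a subgroup
of the full product. -/
def Lamp : Subgroup (H₁ → H₂) where
  carrier := {f | (Function.mulSupport f).Finite}
  one_mem' := by
    refine Set.Finite.subset Set.finite_empty ?_
    intro x hx
    exact absurd rfl hx
  mul_mem' := by
    intro a b ha hb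
    exact (Set.Finite.union ha hb).subset (Function.mulSupport_mul a b)
  inv_mem' := by
    intro a ha
    refine Set.Finite.subset ha ?_
    intro x hx
    simp only [Function.mem_mulSupport] at hx ⊢
    intro h
    exact hx (by simp [h])

/-- Translation of configurations: `(shiftFn h f) x = f (h⁻¹ x)`. -/
def shiftFn (h : H₁) (f : H₁ → H₂) : H₁ → H₂ := fun x => f (h⁻¹ * x)

theorem shiftFn_mem (h : H₁) {f : H₁ → H₂} (hf : f ∈ Lamp H₁ H₂) :
    shiftFn H₁ H₂ h f ∈ Lamp H₁ H₂ := by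
  have hf' : (Function.mulSupport f).Finite := hf
  have hsub : Function.mulSupport (shiftFn H₁ H₂ h f) ⊆
      (fun x => h * x) '' Function.mulSupport f := by
    intro x hx
    exact ⟨h⁻¹ * x, hx, by simp⟩
  exact (hf'.image _).subset hsub

/-- The translation automorphism of the lamp group. -/
noncomputable def shiftEquiv (h : H₁) : Lamp H₁ H₂ ≃* Lamp H₁ H₂ where
  toFun f := ⟨shiftFn H₁ H₂ h f, shiftFn_mem H₁ H₂ h f.2⟩
  invFun f := ⟨shiftFn H₁ H₂ h⁻¹ f, shiftFn_mem H₁ H₂ h⁻¹ f.2⟩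
  left_inv f := Subtype.ext (funext fun x => by simp [shiftFn])
  right_inv f := Subtype.ext (funext fun x => by simp [shiftFn])
  map_mul' f g := rfl

/-- The action of the base `H₁` on the lamp group by translations. -/
noncomputable def wact : H₁ →* MulAut (Lamp H₁ H₂) where
  toFun h := shiftEquiv H₁ H₂ h
  map_one' := by
    apply MulEquiv.ext
    intro f
    exact Subtype.ext (funext fun x => by simp [shiftEquiv, shiftFn])
  map_mul' := by
    intro a b
    apply MulEquiv.ext
    intro f
    exact Subtype.ext (funext fun x => by
      simp [shiftEquiv, shiftFn, MulAut.mul_apply, mul_assoc]; rfl)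

/-- The wreath product `H₂ ≀ H₁ = (⊕_{H₁} H₂) ⋊ H₁`. -/
abbrev WPr := Lamp H₁ H₂ ⋊[wact H₁ H₂] H₁

open Classical in
/-- The lamp configuration equal to `k` at the identity and trivial elsewhere. -/
noncomputable def lampAtFn (k : H₂) : H₁ → H₂ := fun y => if y = (1 : H₁) then k else 1

theorem lampAtFn_mem (k : H₂) : lampAtFn H₁ H₂ k ∈ Lamp H₁ H₂ := by
  have hsub : Function.mulSupport (lampAtFn H₁ H₂ k) ⊆ {(1 : H₁)} := by
    intro x hx
    by_contra hc
    apply hx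
    simp only [lampAtFn]
    rw [if_neg (by simpa using hc)]
  exact (Set.finite_singleton _).subset hsub

/-- Pushforward of a measure under an embedding. -/
noncomputable def pushMeasure {K W : Type*} (emb : K → W) (μ : K → ℝ) : W → ℝ :=
  fun g => ∑' k : K, Set.indicator {k' : K | emb k' = g} μ k

/-- The measure `μ = (1/2)(μ₁ + μ₂)` on `H₂ ≀ H₁`, with `μ₁` supported on the base
copy of `H₁` and `μ₂` on the lamp copy of `H₂` over the identity. -/
noncomputable def wrMeasure (μ₁ : H₁ → ℝ) (μ₂ : H₂ → ℝ) : WPr H₁ H₂ → ℝ :=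
  fun g => (1 / 2) *
    (pushMeasure (fun x : H₁ => (SemidirectProduct.inr x : WPr H₁ H₂)) μ₁ g +
     pushMeasure (fun k : H₂ =>
       (SemidirectProduct.inl ⟨lampAtFn H₁ H₂ k, lampAtFn_mem H₁ H₂ k⟩ : WPr H₁ H₂)) μ₂ g)

end Wreath

/-- `‖f‖_p^p = Σ_x |f x|^p`. -/
noncomputable def normP {G : Type*} [Group G] (p : ℝ) (f : G → ℝ) : ℝ :=
  ∑' x : G, |f x| ^ p

/-- The `p`-Dirichlet energy `E_{p,μ}(f) = (1/2) Σ_{x,y} |f(xy) - f(x)|^p μ(y)`. -/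
noncomputable def energyP {G : Type*} [Group G] (p : ℝ) (μ : G → ℝ) (f : G → ℝ) : ℝ :=
  (1 / 2) * ∑' x : G, ∑' y : G, |f (x * y) - f x| ^ p * μ y

open Classical in
/-- The product test function
`φ(η, x) = (∏_{y ∈ U₁} φ₂(η y)) · φ₁(x) · 1_W(η)` on `H₂ ≀ H₁`, where `W` is the
set of lamp configurations supported in `U₁`. -/
noncomputable def testFn (H₁ H₂ : Type*) [Group H₁] [Group H₂]
    (U₁ : Finset H₁) (φ₁ : H₁ → ℝ) (φ₂ : H₂ → ℝ) : WPr H₁ H₂ → ℝ :=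
  fun g => (∏ y ∈ U₁, φ₂ ((g.left : H₁ → H₂) y)) * φ₁ g.right *
    (if ∀ y : H₁, y ∉ U₁ → (g.left : H₁ → H₂) y = 1 then 1 else 0)

/-!
On configurations supported in `U₁` the test function is the tensor product
`(⊗_{y ∈ U₁} φ₂) ⊗ φ₁`, and these configurations are parametrised by `(U₁ → H₂) × H₁`, so every
sum over the wreath product factors into one-dimensional sums. A base step `z ∈ H₁` only moves
the `φ₁` factor, which gives `‖φ₂‖^|U₁| · E(φ₁)`; a lamp step `k ∈ H₂` at the current position
`x ∈ U₁` only changes the factor `φ₂(η x)`, which gives `‖φ₁‖ · ‖φ₂‖^(|U₁|-1) · E(φ₂)`. Dividing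
by `‖φ‖ = ‖φ₁‖ · ‖φ₂‖^|U₁|` leaves the average of the two Rayleigh quotients.
-/

open Function

theorem hasSum_fin_prod {κ : Type*} {n : ℕ} {w : Fin n → κ → ℝ} {s : Fin n → ℝ}
    (hw : 0 ≤ w) (hs : ∀ i, HasSum (w i) (s i)) :
    HasSum (fun f : Fin n → κ => ∏ i, w i (f i)) (∏ i, s i) := by
  induction n with
  | zero => simp
  | succ n ih =>
    set v : (Fin n → κ) → ℝ := fun f => ∏ i : Fin n, w i.succ (f i)
    have htail : HasSum v (∏ i : Fin n, s i.succ) :=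
      ih (fun i => hw i.succ) (fun i => hs i.succ)
    have h1 : 0 ≤ v := Pi.le_def.2 fun f => Finset.prod_nonneg fun i _ => hw i.succ (f i)
    have hsum : Summable fun q : κ × (Fin n → κ) => w 0 q.1 * v q.2 :=
      (hs 0).summable.mul_of_nonneg htail.summable (hw 0) h1
    have hmul := (hs 0).mul htail hsum
    rw [Fin.prod_univ_succ, ← (Fin.consEquiv fun _ => κ).hasSum_iff]
    have hcons : ((fun f : Fin (n + 1) → κ => ∏ i, w i (f i)) ∘ Fin.consEquiv fun _ => κ) =
        fun q => w 0 q.1 * v q.2 := by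
      funext q
      simp [Fin.prod_univ_succ, v]
    rw [hcons]
    exact hmul

theorem hasSum_pi_prod {ι κ : Type*} [Fintype ι] {w : ι → κ → ℝ} {s : ι → ℝ}
    (hw : 0 ≤ w) (hs : ∀ i, HasSum (w i) (s i)) :
    HasSum (fun f : ι → κ => ∏ i, w i (f i)) (∏ i, s i) := by
  let e := Fintype.equivFin ι
  have h := hasSum_fin_prod (fun j k => hw (e.symm j) k) (fun j => hs (e.symm j))
  rw [← e.symm.prod_comp, ← (e.arrowCongr (Equiv.refl κ)).symm.hasSum_iff]
  convert h using 1
  funext f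
  simp [Equiv.arrowCongr, ← e.symm.prod_comp]

theorem hasSum_prod_of_fiberwise {α β : Type*} {f : α × β → ℝ} (hf : 0 ≤ f) {s : α → ℝ} {t : ℝ}
    (hfib : ∀ a, HasSum (fun b => f (a, b)) (s a)) (hs : HasSum s t) : HasSum f t := by
  have hsum : Summable f := (summable_prod_of_nonneg hf).2
    ⟨fun a => (hfib a).summable, by simpa only [(hfib _).tsum_eq] using hs.summable⟩
  exact (hsum.hasSum.prod_fiberwise hfib).unique hs ▸ hsum.hasSum

theorem hasSum_semidirectProduct_of_fiberwise {N G : Type*} [Group N] [Group G]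
    {φ : G →* MulAut N} {F : N ⋊[φ] G → ℝ} (hF : 0 ≤ F) {s : G → ℝ} {t : ℝ}
    (hfib : ∀ x, HasSum (fun η => F ⟨η, x⟩) (s x)) (hs : HasSum s t) : HasSum F t := by
  let e : G × N ≃ N ⋊[φ] G := (Equiv.prodComm G N).trans SemidirectProduct.equivProd.symm
  rw [← e.hasSum_iff]
  exact hasSum_prod_of_fiberwise (fun q => hF _) hfib hs

section Energy

variable {G : Type*} [Group G] {p : ℝ}

theorem IsSymProb.summable {μ : G → ℝ} (h : IsSymProb μ) : Summable μ := by
  by_contra hs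
  simpa [tsum_eq_zero_of_not_summable hs] using h.2.1

theorem summable_abs_rpow_of_finite {α : Type*} {f : α → ℝ} (hp : p ≠ 0)
    (hf : (support f).Finite) : Summable fun x => |f x| ^ p :=
  summable_of_hasFiniteSupport <| hf.subset fun x hx h0 => hx (by simp [h0, hp])

theorem abs_sub_rpow_le (hp : 0 ≤ p) (x y : ℝ) :
    |x - y| ^ p ≤ 2 ^ p * (|x| ^ p + |y| ^ p) := by
  have hmax : |x - y| ≤ 2 * max |x| |y| := by
    have := abs_sub x y
    have := le_max_left |x| |y|
    have := le_max_right |x| |y|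
    linarith
  calc |x - y| ^ p ≤ (2 * max |x| |y|) ^ p := Real.rpow_le_rpow (abs_nonneg _) hmax hp
    _ = 2 ^ p * max |x| |y| ^ p := Real.mul_rpow zero_le_two (le_max_of_le_left (abs_nonneg x))
    _ ≤ 2 ^ p * (|x| ^ p + |y| ^ p) := by
      gcongr
      rcases max_cases |x| |y| with ⟨h, -⟩ | ⟨h, -⟩ <;> rw [h]
      · exact le_add_of_nonneg_right (by positivity)
      · exact le_add_of_nonneg_left (by positivity)

theorem summable_energy_integrand (hp : 0 < p) {f : G → ℝ} (hf : (support f).Finite)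
    {μ : G → ℝ} (hμ0 : 0 ≤ μ) (hμ : Summable μ) :
    Summable fun q : G × G => |f (q.1 * q.2) - f q.1| ^ p * μ q.2 := by
  have hfp := summable_abs_rpow_of_finite hp.ne' hf
  have hfp0 : 0 ≤ fun x => |f x| ^ p := fun x => by positivity
  have h₂ := hfp.mul_of_nonneg hμ hfp0 hμ0
  let e : G × G ≃ G × G :=
    ⟨fun q => (q.1 * q.2, q.2), fun q => (q.1 * q.2⁻¹, q.2), fun q => by simp, fun q => by simp⟩
  have h₁ : Summable fun q : G × G => |f (q.1 * q.2)| ^ p * μ q.2 := e.summable_iff.2 h₂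
  refine .of_nonneg_of_le (fun q => mul_nonneg (by positivity) (hμ0 _)) (fun q => ?_)
    ((h₁.add h₂).mul_left (2 ^ p))
  calc |f (q.1 * q.2) - f q.1| ^ p * μ q.2
      ≤ 2 ^ p * (|f (q.1 * q.2)| ^ p + |f q.1| ^ p) * μ q.2 :=
        mul_le_mul_of_nonneg_right (abs_sub_rpow_le hp.le _ _) (hμ0 _)
    _ = _ := by ring

theorem summable_tsum_energy_integrand (hp : 0 < p) {f : G → ℝ} (hf : (support f).Finite)
    {μ : G → ℝ} (hμ0 : 0 ≤ μ) (hμ : Summable μ) :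
    Summable fun x => ∑' y, |f (x * y) - f x| ^ p * μ y :=
  ((summable_prod_of_nonneg fun q => mul_nonneg (by positivity) (hμ0 q.2)).1
    (summable_energy_integrand hp hf hμ0 hμ)).2

theorem energyP_const_mul (c : ℝ) (μ f : G → ℝ) :
    energyP p (fun h => c * μ h) f = c * energyP p μ f := by
  simp only [energyP, mul_left_comm _ c, tsum_mul_left]

theorem energyP_add (hp : 0 < p) {f : G → ℝ} (hf : (support f).Finite) {μ ν : G → ℝ}
    (hμ0 : 0 ≤ μ) (hμ : Summable μ) (hν0 : 0 ≤ ν) (hν : Summable ν) :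
    energyP p (fun h => μ h + ν h) f = energyP p μ f + energyP p ν f := by
  have hsμ := (summable_prod_of_nonneg fun q => mul_nonneg (by positivity) (hμ0 q.2)).1
    (summable_energy_integrand hp hf hμ0 hμ)
  have hsν := (summable_prod_of_nonneg fun q => mul_nonneg (by positivity) (hν0 q.2)).1
    (summable_energy_integrand hp hf hν0 hν)
  simp only [energyP, mul_add]
  rw [← mul_add, ← Summable.tsum_add hsμ.2 hsν.2]
  congr 1
  exact tsum_congr fun g => Summable.tsum_add (hsμ.1 g) (hsν.1 g)

end Energy

section PushMeasure

variable {K W : Type*} {emb : K → W}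

theorem pushMeasure_apply (hemb : Injective emb) (μ : K → ℝ) (k : K) :
    pushMeasure emb μ (emb k) = μ k := by
  rw [pushMeasure, tsum_eq_single k fun k' hk' =>
    Set.indicator_of_notMem (s := {k | emb k = emb _}) (fun h => hk' (hemb h)) μ]
  exact Set.indicator_of_mem (s := {k' | emb k' = emb k}) rfl μ

theorem pushMeasure_eq_zero (μ : K → ℝ) {w : W} (hw : w ∉ Set.range emb) :
    pushMeasure emb μ w = 0 := by
  have h : ∀ k, Set.indicator {k' | emb k' = w} μ k = 0 := fun k =>
    Set.indicator_of_notMem (s := {k' | emb k' = w}) (fun h => hw ⟨k, h⟩) μ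
  simp [pushMeasure, h]

theorem pushMeasure_nonneg {μ : K → ℝ} (hμ : 0 ≤ μ) : 0 ≤ pushMeasure emb μ := fun _ =>
  tsum_nonneg fun _ => Set.indicator_nonneg (fun k _ => hμ k) _

theorem summable_pushMeasure (hemb : Injective emb) {μ : K → ℝ} (hμ : Summable μ) :
    Summable (pushMeasure emb μ) := by
  refine (hemb.summable_iff fun w hw => pushMeasure_eq_zero μ hw).1 ?_
  simpa [comp_def, pushMeasure_apply hemb] using hμ

end PushMeasure

theorem energyP_pushMeasure {K G : Type*} [Group G] {emb : K → G} (hemb : Injective emb)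
    (p : ℝ) (μ : K → ℝ) (f : G → ℝ) :
    energyP p (pushMeasure emb μ) f =
      (1 / 2) * ∑' g, ∑' k, |f (g * emb k) - f g| ^ p * μ k := by
  refine congrArg _ (tsum_congr fun g => ?_)
  refine (hemb.tsum_eq fun h hh => ?_).symm.trans ?_
  · by_contra hr
    exact hh (by simp [pushMeasure_eq_zero μ hr])
  · simp only [pushMeasure_apply hemb]

section LampProd

variable {α β : Type*}

theorem Finset.prod_update_weight [DecidableEq α] {U : Finset α} {x : α} (hx : x ∈ U)
    (w : α → β → ℝ) (F : β → ℝ) (η : α → β) :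
    ∏ y ∈ U, update w x F y (η y) = F (η x) * ∏ y ∈ U.erase x, w y (η y) := by
  rw [← Finset.mul_prod_erase U _ hx, update_self]
  exact congrArg _ <| Finset.prod_congr rfl fun y hy => by
    rw [update_of_ne (Finset.ne_of_mem_erase hy)]

variable [One β]

-- The weights may depend on the position, so that a move of the lamp at `x` can be absorbed
-- into the weight at `x`.
open Classical in
noncomputable def lampProd (U : Finset α) (w : α → β → ℝ) (η : α → β) : ℝ :=
  (∏ y ∈ U, w y (η y)) * if ∀ y, y ∉ U → η y = 1 then 1 else 0

theorem abs_lampProd_rpow {p : ℝ} (hp : p ≠ 0) (U : Finset α) (w : α → β → ℝ) (η : α → β) :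
    |lampProd U w η| ^ p = lampProd U (fun y k => |w y k| ^ p) η := by
  rw [lampProd, lampProd, abs_mul, Real.mul_rpow (abs_nonneg _) (abs_nonneg _), Finset.abs_prod,
    Real.finsetProd_rpow _ _ fun _ _ => abs_nonneg _]
  split_ifs <;> simp [hp]

theorem lampProd_nonneg {U : Finset α} {w : α → β → ℝ} (hw : 0 ≤ w) (η : α → β) :
    0 ≤ lampProd U w η :=
  mul_nonneg (Finset.prod_nonneg fun y _ => hw y _) (by split_ifs <;> norm_num)

theorem lampProd_ne_zero {U : Finset α} {w : α → β → ℝ} {η : α → β}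
    (h : lampProd U w η ≠ 0) : (∀ y, y ∉ U → η y = 1) ∧ ∀ y ∈ U, w y (η y) ≠ 0 := by
  by_cases hout : ∀ y, y ∉ U → η y = 1
  · rw [lampProd, if_pos hout, mul_one, Finset.prod_ne_zero_iff] at h
    exact ⟨hout, h⟩
  · simp [lampProd, if_neg hout] at h

variable [DecidableEq α] {U : Finset α} {x : α}

theorem lampProd_update_weight (hx : x ∈ U) (w : α → β → ℝ) (F : β → ℝ) (η : α → β) :
    lampProd U (update w x F) η = F (η x) * lampProd U (update w x 1) η := by
  simp only [lampProd, Finset.prod_update_weight hx, Pi.one_apply, one_mul, mul_assoc]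

theorem lampProd_update (hx : x ∈ U) (w : α → β → ℝ) (η : α → β) (a : β) :
    lampProd U w (update η x a) = w x a * lampProd U (update w x 1) η := by
  have hfix : ∀ y ∈ U, w y (update η x a y) = update w x (fun _ => w x a) y (η y) := by
    intro y _
    by_cases hy : y = x
    · subst hy; simp
    · simp [update_of_ne hy]
  have hout : (∀ y, y ∉ U → update η x a y = 1) ↔ ∀ y, y ∉ U → η y = 1 :=
    forall_congr' fun y => imp_congr_right fun hy => by
      rw [update_of_ne (ne_of_mem_of_not_mem hx hy).symm]
  rw [lampProd, Finset.prod_congr rfl hfix]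
  simp only [lampProd, Finset.prod_update_weight hx, Pi.one_apply, one_mul, mul_assoc]
  congr 3
  exact propext hout

end LampProd

section Lamp

variable {H₁ H₂ : Type*} [Group H₂]

open Classical in
noncomputable def lampOn (U : Finset H₁) (f : U → H₂) : Lamp H₁ H₂ :=
  ⟨fun y => if h : y ∈ U then f ⟨y, h⟩ else 1, U.finite_toSet.subset fun y hy => by
    by_contra hyU
    exact hy (dif_neg hyU)⟩

theorem lampOn_apply_of_mem {U : Finset H₁} (f : U → H₂) {y : H₁} (hy : y ∈ U) :
    (lampOn U f : H₁ → H₂) y = f ⟨y, hy⟩ :=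
  dif_pos hy

theorem lampOn_apply_of_notMem {U : Finset H₁} (f : U → H₂) {y : H₁} (hy : y ∉ U) :
    (lampOn U f : H₁ → H₂) y = 1 :=
  dif_neg hy

theorem lampOn_injective (U : Finset H₁) : Injective (lampOn (H₂ := H₂) U) := fun f g h =>
  funext fun y => by
    simpa [lampOn_apply_of_mem] using congrFun (congrArg Subtype.val h) y

theorem lampProd_lampOn (U : Finset H₁) (w : H₁ → H₂ → ℝ) (f : U → H₂) :
    lampProd U w (lampOn U f : H₁ → H₂) = ∏ y : U, w y (f y) := by
  have hout : ∀ y, y ∉ U → (lampOn U f : H₁ → H₂) y = 1 := fun y => lampOn_apply_of_notMem f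
  rw [lampProd, if_pos hout, mul_one, ← Finset.prod_coe_sort]
  exact Finset.prod_congr rfl fun y _ => by rw [lampOn_apply_of_mem f y.2]

theorem exists_lampOn_eq {U : Finset H₁} {η : Lamp H₁ H₂}
    (hη : ∀ y, y ∉ U → (η : H₁ → H₂) y = 1) : ∃ f, lampOn U f = η := by
  refine ⟨fun y => (η : H₁ → H₂) y, Subtype.ext (funext fun y => ?_)⟩
  by_cases hy : y ∈ U
  · exact lampOn_apply_of_mem _ hy
  · exact (lampOn_apply_of_notMem _ hy).trans (hη y hy).symm

theorem hasSum_lampProd (U : Finset H₁) {w : H₁ → H₂ → ℝ} {s : H₁ → ℝ}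
    (hw : 0 ≤ w) (hs : ∀ y, HasSum (w y) (s y)) :
    HasSum (fun η : Lamp H₁ H₂ => lampProd U w (η : H₁ → H₂)) (∏ y ∈ U, s y) := by
  have hzero : ∀ η : Lamp H₁ H₂, η ∉ Set.range (lampOn U) → lampProd U w (η : H₁ → H₂) = 0 := by
    intro η hη
    have hout : ¬ ∀ y, y ∉ U → (η : H₁ → H₂) y = 1 := fun h => hη (exists_lampOn_eq h)
    simp only [lampProd, if_neg hout, mul_zero]
  rw [← Finset.prod_coe_sort, ← (lampOn_injective U).hasSum_iff hzero]
  simpa only [comp_def, lampProd_lampOn] using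
    hasSum_pi_prod (fun (y : U) k => hw y k) fun (y : U) => hs y

theorem hasSum_lampProd_update [DecidableEq H₁] {U : Finset H₁} {x : H₁} (hx : x ∈ U)
    {w F : H₂ → ℝ} {s t : ℝ} (hw : 0 ≤ w) (hF : 0 ≤ F) (hws : HasSum w s) (hFt : HasSum F t) :
    HasSum (fun η : Lamp H₁ H₂ => lampProd U (update (fun _ => w) x F) (η : H₁ → H₂))
      (t * s ^ (U.card - 1)) := by
  have hs : ∀ y, HasSum (update (fun _ => w) x F y) (update (fun _ => s) x t y) := fun y => by
    rcases eq_or_ne y x with rfl | hy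
    · simpa using hFt
    · simpa [update_of_ne hy] using hws
  have h := hasSum_lampProd U (le_update_iff.2 ⟨hF, fun _ _ => hw⟩) hs
  rwa [Finset.prod_update_of_mem hx, Finset.prod_const, Finset.card_sdiff_of_subset
    (Finset.singleton_subset_iff.2 hx), Finset.card_singleton] at h

end Lamp

section Wreath

variable {H₁ H₂ : Type*} [Group H₁] [Group H₂] {p : ℝ}

theorem testFn_apply (U : Finset H₁) (φ₁ : H₁ → ℝ) (φ₂ : H₂ → ℝ) (g : WPr H₁ H₂) :
    testFn H₁ H₂ U φ₁ φ₂ g = lampProd U (fun _ => φ₂) (g.left : H₁ → H₂) * φ₁ g.right := by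
  simp only [testFn, lampProd]
  ring

noncomputable def lampAt (k : H₂) : Lamp H₁ H₂ := ⟨lampAtFn H₁ H₂ k, lampAtFn_mem H₁ H₂ k⟩

theorem inl_lampAt_injective :
    Injective fun k : H₂ => (SemidirectProduct.inl (lampAt k) : WPr H₁ H₂) := fun k k' h => by
  simpa [lampAt, lampAtFn] using
    congrFun (congrArg Subtype.val (SemidirectProduct.inl_injective h)) 1

theorem left_mul_inl_lampAt [DecidableEq H₁] (g : WPr H₁ H₂) (k : H₂) :
    ((g * SemidirectProduct.inl (lampAt k)).left : H₁ → H₂) =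
      update (g.left : H₁ → H₂) g.right ((g.left : H₁ → H₂) g.right * k) := by
  funext y
  show (g.left : H₁ → H₂) y * lampAtFn H₁ H₂ k (g.right⁻¹ * y) = _
  rcases eq_or_ne y g.right with rfl | hy
  · simp [lampAtFn]
  · simp [lampAtFn, update_of_ne hy, inv_mul_eq_one, Ne.symm hy]

variable {U : Finset H₁} {φ₁ : H₁ → ℝ} {φ₂ : H₂ → ℝ}

open Classical in
theorem support_testFn_subset {S : Finset H₂} (h₁ : support φ₁ ⊆ U) (h₂ : support φ₂ ⊆ S) :
    support (testFn H₁ H₂ U φ₁ φ₂) ⊆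
      (Fintype.piFinset (fun _ : U => S) ×ˢ U).image
        fun q => (⟨lampOn U q.1, q.2⟩ : WPr H₁ H₂) := by
  intro g hg
  rw [mem_support, testFn_apply, mul_ne_zero_iff] at hg
  obtain ⟨hout, hval⟩ := lampProd_ne_zero hg.1
  obtain ⟨f, hf⟩ := exists_lampOn_eq hout
  refine Finset.mem_image.2 ⟨(f, g.right), Finset.mem_product.2 ⟨?_, h₁ hg.2⟩, ?_⟩
  · refine Fintype.mem_piFinset.2 fun y => h₂ ?_
    simpa [← hf, lampOn_apply_of_mem f y.2] using hval y y.2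
  · exact SemidirectProduct.ext hf rfl

theorem ncard_support_testFn_le (h₁ : support φ₁ ⊆ U) (h₂ : (support φ₂).Finite) :
    (support (testFn H₁ H₂ U φ₁ φ₂)).ncard ≤ U.card * (support φ₂).ncard ^ U.card := by
  classical
  have hsub := support_testFn_subset h₁ (Set.Finite.coe_toFinset h₂).ge
  calc (support (testFn H₁ H₂ U φ₁ φ₂)).ncard
      ≤ ((Fintype.piFinset (fun _ : U => h₂.toFinset) ×ˢ U).image
          fun q => (⟨lampOn U q.1, q.2⟩ : WPr H₁ H₂)).card :=
        (Set.ncard_le_ncard hsub (Finset.finite_toSet _)).trans_eq (Set.ncard_coe_finset _)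
    _ ≤ (Fintype.piFinset (fun _ : U => h₂.toFinset) ×ˢ U).card := Finset.card_image_le
    _ = U.card * (support φ₂).ncard ^ U.card := by
      rw [Finset.card_product, Fintype.card_piFinset, Finset.prod_const, Finset.card_univ,
        Fintype.card_coe, Set.ncard_eq_toFinset_card _ h₂, mul_comm]

theorem support_testFn_finite (h₁ : support φ₁ ⊆ U) (h₂ : (support φ₂).Finite) :
    (support (testFn H₁ H₂ U φ₁ φ₂)).Finite := by
  classical
  exact (Finset.finite_toSet _).subset
    (support_testFn_subset h₁ (Set.Finite.coe_toFinset h₂).ge)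

theorem normP_testFn (hp : p ≠ 0) (h₁ : (support φ₁).Finite)
    (h₂ : (support φ₂).Finite) :
    normP p (testFn H₁ H₂ U φ₁ φ₂) = normP p φ₁ * normP p φ₂ ^ U.card := by
  have hφ₁ := summable_abs_rpow_of_finite hp h₁
  have hφ₂ := summable_abs_rpow_of_finite hp h₂
  have hlamp := hasSum_lampProd U (fun _ _ => by positivity) fun (_ : H₁) => hφ₂.hasSum
  have h : HasSum (fun g : WPr H₁ H₂ =>
      lampProd U (fun _ k => |φ₂ k| ^ p) (g.left : H₁ → H₂) * |φ₁ g.right| ^ p)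
      ((∏ _ ∈ U, normP p φ₂) * normP p φ₁) :=
    hasSum_semidirectProduct_of_fiberwise
      (fun g => mul_nonneg (lampProd_nonneg (fun _ _ => by positivity) _) (by positivity))
      (fun x => hlamp.mul_right (|φ₁ x| ^ p)) (hφ₁.hasSum.mul_left _)
  rw [normP]
  simp only [testFn_apply, abs_mul, Real.mul_rpow (abs_nonneg _) (abs_nonneg _),
    abs_lampProd_rpow hp]
  rw [h.tsum_eq, Finset.prod_const, mul_comm]

theorem tsum_testFn_mul_inr (hp : p ≠ 0) (μ₁ : H₁ → ℝ) (g : WPr H₁ H₂) :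
    ∑' z, |testFn H₁ H₂ U φ₁ φ₂ (g * SemidirectProduct.inr z) - testFn H₁ H₂ U φ₁ φ₂ g| ^ p *
        μ₁ z =
      lampProd U (fun _ k => |φ₂ k| ^ p) (g.left : H₁ → H₂) *
        ∑' z, |φ₁ (g.right * z) - φ₁ g.right| ^ p * μ₁ z := by
  simp only [testFn_apply, SemidirectProduct.mul_left, SemidirectProduct.mul_right,
    SemidirectProduct.left_inr, SemidirectProduct.right_inr, map_one, mul_one, ← mul_sub,
    abs_mul, Real.mul_rpow (abs_nonneg _) (abs_nonneg _), abs_lampProd_rpow hp, mul_assoc,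
    tsum_mul_left]

theorem energyP_pushMeasure_inr (hp : 0 < p) (h₁ : (support φ₁).Finite)
    (h₂ : (support φ₂).Finite) {μ₁ : H₁ → ℝ} (hμ0 : 0 ≤ μ₁) (hμ : Summable μ₁) :
    energyP p (pushMeasure (fun x : H₁ => (SemidirectProduct.inr x : WPr H₁ H₂)) μ₁)
        (testFn H₁ H₂ U φ₁ φ₂) =
      normP p φ₂ ^ U.card * energyP p μ₁ φ₁ := by
  set a : H₁ → ℝ := fun x => ∑' z, |φ₁ (x * z) - φ₁ x| ^ p * μ₁ z
  have hlamp := hasSum_lampProd U (fun _ _ => by positivity) fun (_ : H₁) =>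
    (summable_abs_rpow_of_finite hp.ne' h₂).hasSum
  have ha := summable_tsum_energy_integrand hp h₁ hμ0 hμ
  have h : HasSum (fun g : WPr H₁ H₂ =>
      lampProd U (fun _ k => |φ₂ k| ^ p) (g.left : H₁ → H₂) * a g.right)
      ((∏ _ ∈ U, normP p φ₂) * ∑' x, a x) :=
    hasSum_semidirectProduct_of_fiberwise
      (fun g => mul_nonneg (lampProd_nonneg (fun _ _ => by positivity) _)
        (tsum_nonneg fun z => mul_nonneg (by positivity) (hμ0 z)))
      (fun x => hlamp.mul_right (a x)) (ha.hasSum.mul_left _)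
  rw [energyP_pushMeasure SemidirectProduct.inr_injective,
    tsum_congr (tsum_testFn_mul_inr hp.ne' μ₁), h.tsum_eq,
    Finset.prod_const, energyP]
  ring

theorem tsum_testFn_mul_inl_lampAt [DecidableEq H₁] (hp : p ≠ 0) (h₁ : support φ₁ ⊆ U)
    (μ₂ : H₂ → ℝ) (g : WPr H₁ H₂) :
    ∑' k, |testFn H₁ H₂ U φ₁ φ₂ (g * SemidirectProduct.inl (lampAt k)) -
        testFn H₁ H₂ U φ₁ φ₂ g| ^ p * μ₂ k =
      |φ₁ g.right| ^ p * lampProd U (update (fun _ k => |φ₂ k| ^ p) g.right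
        fun a => ∑' k, |φ₂ (a * k) - φ₂ a| ^ p * μ₂ k) (g.left : H₁ → H₂) := by
  have hright : ∀ k, (g * SemidirectProduct.inl (lampAt k)).right = g.right := by simp
  by_cases hx : g.right ∈ U
  swap
  · have hφ₁ : φ₁ g.right = 0 := notMem_support.1 fun h => hx (h₁ h)
    simp [testFn_apply, hright, hφ₁, Real.zero_rpow hp]
  have hsplit : ∀ a, lampProd U (fun _ => φ₂) (update (g.left : H₁ → H₂) g.right a) =
      φ₂ a * lampProd U (update (fun _ => φ₂) g.right 1) (g.left : H₁ → H₂) :=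
    lampProd_update hx _ _
  have hη : lampProd U (fun _ => φ₂) (g.left : H₁ → H₂) =
      φ₂ ((g.left : H₁ → H₂) g.right) *
        lampProd U (update (fun _ => φ₂) g.right 1) (g.left : H₁ → H₂) := by
    rw [← hsplit, update_eq_self]
  have habs : (fun y k => |update (fun _ => φ₂) g.right 1 y k| ^ p) =
      update (fun (_ : H₁) k => |φ₂ k| ^ p) g.right 1 := by
    funext y k
    rcases eq_or_ne y g.right with rfl | hy
    · simp
    · simp [update_of_ne hy]
  have hdiff : ∀ k, |testFn H₁ H₂ U φ₁ φ₂ (g * SemidirectProduct.inl (lampAt k)) -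
      testFn H₁ H₂ U φ₁ φ₂ g| ^ p * μ₂ k =
      |φ₂ ((g.left : H₁ → H₂) g.right * k) - φ₂ ((g.left : H₁ → H₂) g.right)| ^ p * μ₂ k *
        (|φ₁ g.right| ^ p *
          lampProd U (update (fun _ k => |φ₂ k| ^ p) g.right 1) (g.left : H₁ → H₂)) := by
    intro k
    rw [testFn_apply, testFn_apply, hright, left_mul_inl_lampAt, hsplit, hη, ← sub_mul,
      ← sub_mul, abs_mul, Real.mul_rpow (abs_nonneg _) (abs_nonneg _), abs_mul,
      Real.mul_rpow (abs_nonneg _) (abs_nonneg _), abs_lampProd_rpow hp, habs]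
    ring
  rw [tsum_congr hdiff, tsum_mul_right, lampProd_update_weight hx _
    fun a => ∑' k, |φ₂ (a * k) - φ₂ a| ^ p * μ₂ k]
  ring

theorem energyP_pushMeasure_inl (hp : 0 < p) (h₁ : support φ₁ ⊆ U)
    (h₂ : (support φ₂).Finite) {μ₂ : H₂ → ℝ} (hμ0 : 0 ≤ μ₂) (hμ : Summable μ₂) :
    energyP p (pushMeasure (fun k : H₂ => (SemidirectProduct.inl (lampAt k) : WPr H₁ H₂)) μ₂)
        (testFn H₁ H₂ U φ₁ φ₂) =
      normP p φ₁ * normP p φ₂ ^ (U.card - 1) * energyP p μ₂ φ₂ := by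
  classical
  set b : H₂ → ℝ := fun a => ∑' k, |φ₂ (a * k) - φ₂ a| ^ p * μ₂ k
  set C := (∑' a, b a) * normP p φ₂ ^ (U.card - 1)
  have hb := summable_tsum_energy_integrand hp h₂ hμ0 hμ
  have hb0 : 0 ≤ b := fun a => tsum_nonneg fun k => mul_nonneg (by positivity) (hμ0 k)
  have hφ₂ := summable_abs_rpow_of_finite hp.ne' h₂
  have hφ₁ := summable_abs_rpow_of_finite hp.ne' (U.finite_toSet.subset h₁)
  have hw : ∀ x, 0 ≤ update (fun (_ : H₁) k => |φ₂ k| ^ p) x b := fun x =>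
    le_update_iff.2 ⟨hb0, fun _ _ _ => by positivity⟩
  have hfib : ∀ x, HasSum (fun η : Lamp H₁ H₂ => |φ₁ x| ^ p *
      lampProd U (update (fun _ k => |φ₂ k| ^ p) x b) (η : H₁ → H₂)) (|φ₁ x| ^ p * C) := by
    intro x
    by_cases hx : x ∈ U
    · exact (hasSum_lampProd_update hx (fun _ => by positivity) hb0 hφ₂.hasSum
        hb.hasSum).mul_left _
    · have hφ₁x : φ₁ x = 0 := notMem_support.1 fun h => hx (h₁ h)
      simp [hφ₁x, Real.zero_rpow hp.ne']
  have h : HasSum (fun g : WPr H₁ H₂ => |φ₁ g.right| ^ p *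
      lampProd U (update (fun _ k => |φ₂ k| ^ p) g.right b) (g.left : H₁ → H₂))
      (normP p φ₁ * C) :=
    hasSum_semidirectProduct_of_fiberwise
      (fun g => mul_nonneg (by positivity) (lampProd_nonneg (hw _) _)) hfib
      (hφ₁.hasSum.mul_right C)
  rw [energyP_pushMeasure inl_lampAt_injective,
    tsum_congr (tsum_testFn_mul_inl_lampAt hp.ne' h₁ μ₂), h.tsum_eq, energyP]
  ring

theorem energyP_wrMeasure (hp : 0 < p) {f : WPr H₁ H₂ → ℝ} (hf : (support f).Finite)
    {μ₁ : H₁ → ℝ} {μ₂ : H₂ → ℝ} (hμ₁0 : 0 ≤ μ₁) (hμ₁ : Summable μ₁) (hμ₂0 : 0 ≤ μ₂) (hμ₂ : Summable μ₂) :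
    energyP p (wrMeasure H₁ H₂ μ₁ μ₂) f =
      (1 / 2) *
        (energyP p (pushMeasure (fun x : H₁ => (SemidirectProduct.inr x : WPr H₁ H₂)) μ₁) f +
          energyP p
            (pushMeasure (fun k : H₂ => (SemidirectProduct.inl (lampAt k) : WPr H₁ H₂)) μ₂) f) := by
  rw [← energyP_add hp hf (pushMeasure_nonneg hμ₁0)
    (summable_pushMeasure SemidirectProduct.inr_injective hμ₁) (pushMeasure_nonneg hμ₂0)
    (summable_pushMeasure inl_lampAt_injective hμ₂), ← energyP_const_mul]
  rfl

end Wreath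

/-- Properties of the product test function on a wreath product: its `p`-norm
factorizes, its support has size at most `|U₁|·|support φ₂|^{|U₁|}`, and its
Rayleigh quotient for `μ = (1/2)(μ₁+μ₂)` is the average of the Rayleigh
quotients of `φ₁` and `φ₂`. -/
theorem wreath_test_function (H₁ H₂ : Type) [Group H₁] [Group H₂]
    (μ₁ : H₁ → ℝ) (μ₂ : H₂ → ℝ) (h₁ : IsSymProb μ₁) (h₂ : IsSymProb μ₂)
    (p : ℝ) (hp : 1 ≤ p)
    (U₁ : Finset H₁) (φ₁ : H₁ → ℝ) (φ₂ : H₂ → ℝ)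
    (hsupp₁ : Function.support φ₁ = (U₁ : Set H₁))
    (hsupp₂ : (Function.support φ₂).Finite)
    (hn₁ : normP p φ₁ ≠ 0) (hn₂ : normP p φ₂ ≠ 0) :
    normP p (testFn H₁ H₂ U₁ φ₁ φ₂) = normP p φ₁ * normP p φ₂ ^ U₁.card ∧
    (Function.support (testFn H₁ H₂ U₁ φ₁ φ₂)).ncard ≤
      U₁.card * (Function.support φ₂).ncard ^ U₁.card ∧
    energyP p (wrMeasure H₁ H₂ μ₁ μ₂) (testFn H₁ H₂ U₁ φ₁ φ₂) /
        normP p (testFn H₁ H₂ U₁ φ₁ φ₂) =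
      (1 / 2) * (energyP p μ₁ φ₁ / normP p φ₁ + energyP p μ₂ φ₂ / normP p φ₂) := by
  have hp0 : 0 < p := by linarith
  have hfin₁ : (support φ₁).Finite := hsupp₁ ▸ U₁.finite_toSet
  have hU : U₁.card ≠ 0 := by
    intro hcard
    have hφ₁ : φ₁ = 0 := by
      simpa [Finset.card_eq_zero.1 hcard] using hsupp₁
    exact hn₁ (by simp [normP, hφ₁, Real.zero_rpow hp0.ne'])
  have hnorm := normP_testFn (U := U₁) hp0.ne' hfin₁ hsupp₂
  refine ⟨hnorm, ncard_support_testFn_le hsupp₁.subset hsupp₂, ?_⟩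
  rw [energyP_wrMeasure hp0 (support_testFn_finite hsupp₁.subset hsupp₂) h₁.1 h₁.summable h₂.1
      h₂.summable, energyP_pushMeasure_inr hp0 hfin₁ hsupp₂ h₁.1 h₁.summable,
    energyP_pushMeasure_inl hp0 hsupp₁.subset hsupp₂ h₂.1 h₂.summable, hnorm,
    ← pow_sub_one_mul hU]
  field_simp
end

section
/- Moving-average pseudo-Poincaré on groups of polynomial growth: if G has polynomial volume growth (V(2r) ≤ C_D·V(r) for all r ≥ 1), then for each p ≥ 1 there is a constant C(G,p) such that for all integers r > s ≥ 1 and all finitely supported f: G → ℝ, Σ_{x,y}|f(xy)−f(x)|^p·u_r(y) ≤ C(G,p)·(r/s)^p·Σ_{x,y}|f(xy)−f(x)|^p·u_s(y), where u_t is the uniform probability measure on the word-ball of radius t. -/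
open scoped BigOperators

/-- Word length with respect to a finite symmetric generating set `S`. -/
noncomputable def wordLength {G : Type*} [Group G] (S : Finset G) (g : G) : ℕ :=
  sInf {n : ℕ | ∃ l : List G, (∀ x ∈ l, x ∈ S) ∧ l.length = n ∧ l.prod = g}

/-- The word ball of radius `r`. -/
def ballSet {G : Type*} [Group G] (S : Finset G) (r : ℝ) : Set G :=
  {g : G | ((wordLength S g : ℝ)) ≤ r}

open Classical in
/-- Uniform probability measure on the word ball of radius `r`. -/
noncomputable def unifBall {G : Type*} [Group G] (S : Finset G) (r : ℝ) : G → ℝ :=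
  fun y => if ((wordLength S y : ℝ)) ≤ r then (((ballSet S r).ncard : ℝ))⁻¹ else 0

/-!
Write `φ y = ∑ₓ |f (x y) - f x| ^ p` (`diffEnergy f p`). By Minkowski's inequality and the
translation invariance of `∑ₓ`, `φ ^ (1/p)` is subadditive, so if `y` is a product of `K`
elements on which `φ ≤ M`, then `φ y ≤ K ^ p M`. An element `z` of length `≤ a` is controlled by
averaging `φ z ≤ 2 ^ (p-1) (φ ξ + φ (ξ⁻¹ z))` over `ξ` in the ball of radius `c`: both `ξ` and
`ξ⁻¹ z` lie in the ball of radius `s ≥ a + c`, which costs the volume ratio `|B(s)| / |B(c)|`.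
Cutting words of length `≤ r` into `K ≈ r / a` pieces with `a = ⌈s/2⌉`, `c = ⌊s/2⌋` gives the
factor `(r/s) ^ p`, and doubling bounds `|B(s)| / |B(⌊s/2⌋)|`.
-/

section

variable {G : Type*} [Group G]

theorem wordLength_list_prod_le {S : Finset G} {l : List G} (hl : ∀ x ∈ l, x ∈ S) :
    wordLength S l.prod ≤ l.length :=
  Nat.sInf_le ⟨l, hl, rfl, rfl⟩

theorem wordLength_one (S : Finset G) : wordLength S (1 : G) = 0 :=
  Nat.le_zero.1 (wordLength_list_prod_le (l := []) (by simp))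

theorem one_mem_ballSet (S : Finset G) {t : ℝ} (ht : 0 ≤ t) : (1 : G) ∈ ballSet S t := by
  simpa [ballSet, wordLength_one] using ht

theorem ballSet_mono (S : Finset G) {t t' : ℝ} (h : t ≤ t') : ballSet S t ⊆ ballSet S t' :=
  fun _ hg => le_trans hg h

def IsSymmetricGenerating (S : Finset G) : Prop :=
  (∀ s ∈ S, s⁻¹ ∈ S) ∧ Subgroup.closure (S : Set G) = ⊤

namespace IsSymmetricGenerating

variable {S : Finset G}

theorem exists_list_prod_eq (hS : IsSymmetricGenerating S) (g : G) :
    ∃ l : List G, (∀ x ∈ l, x ∈ S) ∧ l.prod = g := by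
  have hinv : ((S : Set G) ∪ (S : Set G)⁻¹) = S :=
    Set.union_eq_left.2 fun x hx => by simpa using hS.1 _ hx
  have hg : g ∈ (Subgroup.closure (S : Set G)).toSubmonoid := by simp [hS.2]
  rw [Subgroup.closure_toSubmonoid, hinv] at hg
  exact Submonoid.exists_list_of_mem_closure hg

theorem exists_list_length_eq_wordLength (hS : IsSymmetricGenerating S) (g : G) :
    ∃ l : List G, (∀ x ∈ l, x ∈ S) ∧ l.length = wordLength S g ∧ l.prod = g := by
  obtain ⟨l, hl, rfl⟩ := hS.exists_list_prod_eq g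
  exact Nat.sInf_mem (s := {n | ∃ l' : List G, (∀ x ∈ l', x ∈ S) ∧ l'.length = n ∧
    l'.prod = l.prod}) ⟨l.length, l, hl, rfl, rfl⟩

theorem wordLength_mul_le (hS : IsSymmetricGenerating S) (g h : G) :
    wordLength S (g * h) ≤ wordLength S g + wordLength S h := by
  obtain ⟨l₁, hl₁, hlen₁, rfl⟩ := hS.exists_list_length_eq_wordLength g
  obtain ⟨l₂, hl₂, hlen₂, rfl⟩ := hS.exists_list_length_eq_wordLength h
  rw [← hlen₁, ← hlen₂, ← List.length_append, ← List.prod_append]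
  exact wordLength_list_prod_le fun x hx => (List.mem_append.1 hx).elim (hl₁ x) (hl₂ x)

theorem wordLength_inv_le (hS : IsSymmetricGenerating S) (g : G) :
    wordLength S g⁻¹ ≤ wordLength S g := by
  obtain ⟨l, hl, hlen, rfl⟩ := hS.exists_list_length_eq_wordLength g
  rw [← hlen, List.prod_inv_reverse, ← List.length_map (f := fun x : G => x⁻¹),
    ← List.length_reverse]
  refine wordLength_list_prod_le fun x hx => ?_
  obtain ⟨y, hy, rfl⟩ := List.mem_map.1 (List.mem_reverse.1 hx)
  exact hS.1 y (hl y hy)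

theorem ballSet_finite (hS : IsSymmetricGenerating S) (t : ℝ) : (ballSet S t).Finite := by
  refine ((List.finite_length_le S ⌊t⌋₊).image fun l => (l.map Subtype.val).prod).subset ?_
  intro g hg
  obtain ⟨l, hl, hlen, rfl⟩ := hS.exists_list_length_eq_wordLength g
  refine ⟨l.attach.map fun x => (⟨x.1, hl x.1 x.2⟩ : S), ?_, ?_⟩
  · simpa [hlen] using Nat.le_floor hg
  · simp [List.map_map, Function.comp_def]

theorem exists_list_prod_eq_of_wordLength_le_mul (hS : IsSymmetricGenerating S) {y : G}
    {K a : ℕ} (hy : wordLength S y ≤ K * a) :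
    ∃ L : List G, L.length = K ∧ (∀ z ∈ L, wordLength S z ≤ a) ∧ L.prod = y := by
  obtain ⟨l, hl, hlen, rfl⟩ := hS.exists_list_length_eq_wordLength y
  rw [← hlen] at hy
  clear hlen
  induction K generalizing l with
  | zero => exact ⟨[], rfl, by simp, by simp [List.length_eq_zero_iff.1 (by simpa using hy)]⟩
  | succ K ih =>
    obtain ⟨L, hlenL, hL, hprod⟩ := ih (l.drop a) (fun x hx => hl x (List.mem_of_mem_drop hx))
      (by simp only [List.length_drop]; rw [Nat.succ_mul] at hy; omega)
    refine ⟨(l.take a).prod :: L, by simp [hlenL], ?_, ?_⟩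
    · rintro z (_ | ⟨_, hz⟩)
      · exact (wordLength_list_prod_le fun x hx => hl x (List.mem_of_mem_take hx)).trans
          (List.length_take_le _ _)
      · exact hL z hz
    · rw [List.prod_cons, hprod, List.prod_take_mul_prod_drop]

end IsSymmetricGenerating

theorem Real.rpow_add_le_mul_rpow_add_rpow {a b p : ℝ} (ha : 0 ≤ a) (hb : 0 ≤ b) (hp : 1 ≤ p) :
    (a + b) ^ p ≤ 2 ^ (p - 1) * (a ^ p + b ^ p) := by
  lift a to NNReal using ha
  lift b to NNReal using hb
  exact_mod_cast NNReal.rpow_add_le_mul_rpow_add_rpow a b hp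

noncomputable def diffEnergy (f : G → ℝ) (p : ℝ) (y : G) : ℝ :=
  ∑' x : G, |f (x * y) - f x| ^ p

section diffEnergy

variable {f : G → ℝ} {p : ℝ}

theorem diffEnergy_nonneg (f : G → ℝ) (p : ℝ) (y : G) : 0 ≤ diffEnergy f p y :=
  tsum_nonneg fun _ => Real.rpow_nonneg (abs_nonneg _) p

theorem diffEnergy_one (hp : p ≠ 0) : diffEnergy f p 1 = 0 := by
  simp [diffEnergy, Real.zero_rpow hp]

theorem tsum_abs_mul_sub_rpow_eq_diffEnergy (f : G → ℝ) (p : ℝ) (y z : G) :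
    ∑' x : G, |f (x * y * z) - f (x * y)| ^ p = diffEnergy f p z :=
  (Equiv.mulRight y).tsum_eq fun x => |f (x * z) - f x| ^ p

theorem summable_abs_sub_rpow (hf : (Function.support f).Finite) (hp : p ≠ 0) (a b : G) :
    Summable fun x : G => |f (x * a) - f (x * b)| ^ p := by
  refine summable_of_hasFiniteSupport (((hf.preimage (mul_left_injective a).injOn).union
    (hf.preimage (mul_left_injective b).injOn)).subset fun x hx => ?_)
  by_contra h
  simp only [Set.mem_union, Set.mem_preimage, Function.mem_support, not_or, not_not] at h
  simp [h.1, h.2, Real.zero_rpow hp] at hx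

theorem diffEnergy_mul_rpow_inv_le (hf : (Function.support f).Finite) (hp : 1 ≤ p) (y z : G) :
    diffEnergy f p (y * z) ^ p⁻¹ ≤ diffEnergy f p y ^ p⁻¹ + diffEnergy f p z ^ p⁻¹ := by
  have hp0 : p ≠ 0 := by positivity
  set a := fun x : G => |f (x * y * z) - f (x * y)|
  set b := fun x : G => |f (x * y) - f x|
  have ha : Summable fun x => a x ^ p := summable_abs_sub_rpow hf hp0 (y * z) y |>.congr
    fun x => by simp [a, mul_assoc]
  have hb : Summable fun x => b x ^ p := by simpa [b] using summable_abs_sub_rpow hf hp0 y 1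
  obtain ⟨hab, hMink⟩ := Real.Lp_add_le_tsum_of_nonneg hp (fun _ => abs_nonneg _)
    (fun _ => abs_nonneg _) ha hb
  have htri : diffEnergy f p (y * z) ≤ ∑' x, (a x + b x) ^ p := by
    refine Summable.tsum_le_tsum (fun x => ?_)
      (by simpa using summable_abs_sub_rpow hf hp0 (y * z) 1) hab
    simp only [a, b, ← mul_assoc]
    exact Real.rpow_le_rpow (abs_nonneg _) (abs_sub_le _ _ _) (by positivity)
  calc diffEnergy f p (y * z) ^ p⁻¹ ≤ (∑' x, (a x + b x) ^ p) ^ (1 / p) := by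
        rw [one_div]; exact Real.rpow_le_rpow (diffEnergy_nonneg f p _) htri (by positivity)
    _ ≤ _ := hMink
    _ = _ := by rw [add_comm, tsum_abs_mul_sub_rpow_eq_diffEnergy, one_div]; rfl

theorem diffEnergy_list_prod_rpow_inv_le (hf : (Function.support f).Finite) (hp : 1 ≤ p)
    (L : List G) :
    diffEnergy f p L.prod ^ p⁻¹ ≤ (L.map fun z => diffEnergy f p z ^ p⁻¹).sum := by
  induction L with
  | nil =>
    simp [diffEnergy_one (show p ≠ 0 by positivity), Real.zero_rpow (show p⁻¹ ≠ 0 by positivity)]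
  | cons y L ih =>
    rw [List.prod_cons, List.map_cons, List.sum_cons]
    exact (diffEnergy_mul_rpow_inv_le hf hp y L.prod).trans (by gcongr)

theorem diffEnergy_list_prod_le (hf : (Function.support f).Finite) (hp : 1 ≤ p) {L : List G}
    {M : ℝ} (hM : 0 ≤ M) (hL : ∀ z ∈ L, diffEnergy f p z ≤ M) :
    diffEnergy f p L.prod ≤ (L.length : ℝ) ^ p * M := by
  have hp0 : p ≠ 0 := by positivity
  have hsum : (L.map fun z => diffEnergy f p z ^ p⁻¹).sum ≤ L.length * M ^ p⁻¹ := by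
    have := List.sum_le_card_nsmul (L.map fun z => diffEnergy f p z ^ p⁻¹) (M ^ p⁻¹) fun x hx => by
      obtain ⟨z, hz, rfl⟩ := List.mem_map.1 hx
      exact Real.rpow_le_rpow (diffEnergy_nonneg f p z) (hL z hz) (by positivity)
    simpa using this
  calc diffEnergy f p L.prod = (diffEnergy f p L.prod ^ p⁻¹) ^ p :=
        (Real.rpow_inv_rpow (diffEnergy_nonneg f p _) hp0).symm
    _ ≤ (L.length * M ^ p⁻¹) ^ p :=
        Real.rpow_le_rpow (Real.rpow_nonneg (diffEnergy_nonneg f p _) _)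
          ((diffEnergy_list_prod_rpow_inv_le hf hp L).trans hsum) (by positivity)
    _ = (L.length : ℝ) ^ p * M := by
        rw [Real.mul_rpow (by positivity) (by positivity), Real.rpow_inv_rpow hM hp0]

theorem diffEnergy_le_two_rpow_mul (hf : (Function.support f).Finite) (hp : 1 ≤ p) (ξ z : G) :
    diffEnergy f p z ≤ 2 ^ (p - 1) * (diffEnergy f p ξ + diffEnergy f p (ξ⁻¹ * z)) := by
  have hp0 : p ≠ 0 := by positivity
  have hN := diffEnergy_mul_rpow_inv_le hf hp ξ (ξ⁻¹ * z)
  rw [mul_inv_cancel_left] at hN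
  calc diffEnergy f p z = (diffEnergy f p z ^ p⁻¹) ^ p :=
        (Real.rpow_inv_rpow (diffEnergy_nonneg f p _) hp0).symm
    _ ≤ (diffEnergy f p ξ ^ p⁻¹ + diffEnergy f p (ξ⁻¹ * z) ^ p⁻¹) ^ p :=
        Real.rpow_le_rpow (Real.rpow_nonneg (diffEnergy_nonneg f p _) _) hN (by positivity)
    _ ≤ 2 ^ (p - 1) * ((diffEnergy f p ξ ^ p⁻¹) ^ p + (diffEnergy f p (ξ⁻¹ * z) ^ p⁻¹) ^ p) :=
        Real.rpow_add_le_mul_rpow_add_rpow (Real.rpow_nonneg (diffEnergy_nonneg f p _) _)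
          (Real.rpow_nonneg (diffEnergy_nonneg f p _) _) hp
    _ = _ := by
        rw [Real.rpow_inv_rpow (diffEnergy_nonneg f p _) hp0,
          Real.rpow_inv_rpow (diffEnergy_nonneg f p _) hp0]

end diffEnergy

theorem card_mul_diffEnergy_le {f : G → ℝ} {p : ℝ} (hf : (Function.support f).Finite)
    (hp : 1 ≤ p) {Ξ T : Finset G} {z : G} (hΞT : Ξ ⊆ T) (hz : ∀ ξ ∈ Ξ, ξ⁻¹ * z ∈ T) :
    Ξ.card * diffEnergy f p z ≤ 2 ^ p * ∑ η ∈ T, diffEnergy f p η := by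
  classical
  have hT : ∀ Ξ' ⊆ T, ∑ η ∈ Ξ', diffEnergy f p η ≤ ∑ η ∈ T, diffEnergy f p η := fun _ h =>
    Finset.sum_le_sum_of_subset_of_nonneg h fun η _ _ => diffEnergy_nonneg f p η
  have htrans : ∑ ξ ∈ Ξ, diffEnergy f p (ξ⁻¹ * z) ≤ ∑ η ∈ T, diffEnergy f p η := by
    rw [← Finset.sum_image fun _ _ _ _ h => by simpa using h]
    exact hT _ fun η hη => by obtain ⟨ξ, hξ, rfl⟩ := Finset.mem_image.1 hη; exact hz ξ hξ
  calc Ξ.card * diffEnergy f p z = ∑ _ξ ∈ Ξ, diffEnergy f p z := by simp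
    _ ≤ ∑ ξ ∈ Ξ, 2 ^ (p - 1) * (diffEnergy f p ξ + diffEnergy f p (ξ⁻¹ * z)) :=
        Finset.sum_le_sum fun ξ _ => diffEnergy_le_two_rpow_mul hf hp ξ z
    _ = 2 ^ (p - 1) * (∑ ξ ∈ Ξ, diffEnergy f p ξ + ∑ ξ ∈ Ξ, diffEnergy f p (ξ⁻¹ * z)) := by
        rw [← Finset.mul_sum, Finset.sum_add_distrib]
    _ ≤ 2 ^ (p - 1) * (∑ η ∈ T, diffEnergy f p η + ∑ η ∈ T, diffEnergy f p η) :=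
        mul_le_mul_of_nonneg_left (add_le_add (hT Ξ hΞT) htrans) (by positivity)
    _ = 2 ^ p * ∑ η ∈ T, diffEnergy f p η := by
        rw [← two_mul, ← mul_assoc, ← Real.rpow_add_one two_ne_zero, sub_add_cancel]

noncomputable def ballAverage (S : Finset G) (φ : G → ℝ) (t : ℝ) : ℝ :=
  (∑ᶠ y ∈ ballSet S t, φ y) / (ballSet S t).ncard

theorem ballAverage_nonneg (S : Finset G) {φ : G → ℝ} (hφ : ∀ y, 0 ≤ φ y) (t : ℝ) :
    0 ≤ ballAverage S φ t :=
  div_nonneg (finsum_nonneg fun y => finsum_nonneg fun _ => hφ y) (Nat.cast_nonneg _)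

theorem tsum_tsum_mul_unifBall_eq {S : Finset G} {f : G → ℝ} {p : ℝ}
    (hf : (Function.support f).Finite) (hp : p ≠ 0) {t : ℝ} (hB : (ballSet S t).Finite) :
    ∑' x : G, ∑' y : G, |f (x * y) - f x| ^ p * unifBall S t y
      = ballAverage S (diffEnergy f p) t := by
  have hinner : ∀ x : G, ∑' y : G, |f (x * y) - f x| ^ p * unifBall S t y
      = ∑ y ∈ hB.toFinset, |f (x * y) - f x| ^ p / (ballSet S t).ncard := by
    intro x
    rw [tsum_eq_sum (s := hB.toFinset) fun y hy => ?_]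
    · refine Finset.sum_congr rfl fun y hy => ?_
      rw [Set.Finite.mem_toFinset] at hy
      simp [unifBall, show (wordLength S y : ℝ) ≤ t from hy, div_eq_mul_inv]
    · rw [Set.Finite.mem_toFinset] at hy
      simp [unifBall, show ¬ (wordLength S y : ℝ) ≤ t from hy]
  simp_rw [hinner, ballAverage, finsum_mem_eq_finite_toFinset_sum _ hB, Finset.sum_div]
  rw [Summable.tsum_finsetSum fun y _ => ?_]
  · simp_rw [tsum_div_const]; rfl
  · simpa using (summable_abs_sub_rpow hf hp y 1).div_const _

namespace IsSymmetricGenerating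

variable {S : Finset G}

theorem ncard_ballSet_pos (hS : IsSymmetricGenerating S) {t : ℝ} (ht : 0 ≤ t) :
    0 < (ballSet S t).ncard :=
  (Set.ncard_pos (hS.ballSet_finite t)).2 ⟨1, one_mem_ballSet S ht⟩

theorem ncard_ballSet_mono (hS : IsSymmetricGenerating S) {t t' : ℝ} (h : t ≤ t') :
    (ballSet S t).ncard ≤ (ballSet S t').ncard :=
  Set.ncard_le_ncard (ballSet_mono S h) (hS.ballSet_finite t')

theorem sum_eq_ncard_mul_ballAverage (hS : IsSymmetricGenerating S) (φ : G → ℝ) {t : ℝ}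
    (ht : 0 ≤ t) :
    ∑ y ∈ (hS.ballSet_finite t).toFinset, φ y = (ballSet S t).ncard * ballAverage S φ t := by
  have := hS.ncard_ballSet_pos ht
  rw [ballAverage, finsum_mem_eq_finite_toFinset_sum _ (hS.ballSet_finite t)]
  field_simp

theorem ballAverage_le (hS : IsSymmetricGenerating S) {φ : G → ℝ} {t M : ℝ} (ht : 0 ≤ t)
    (h : ∀ y ∈ ballSet S t, φ y ≤ M) : ballAverage S φ t ≤ M := by
  have hsum := Finset.sum_le_card_nsmul _ _ _ fun y hy =>
    h y ((hS.ballSet_finite t).mem_toFinset.1 hy)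
  rw [nsmul_eq_mul, ← Set.ncard_eq_toFinset_card _ (hS.ballSet_finite t),
    hS.sum_eq_ncard_mul_ballAverage φ ht] at hsum
  exact le_of_mul_le_mul_left hsum (by exact_mod_cast hS.ncard_ballSet_pos ht)

theorem diffEnergy_le_of_wordLength_le (hS : IsSymmetricGenerating S) {f : G → ℝ} {p : ℝ}
    (hf : (Function.support f).Finite) (hp : 1 ≤ p) {a c s : ℕ} (has : a + c ≤ s) {z : G}
    (hz : wordLength S z ≤ a) :
    diffEnergy f p z ≤
      2 ^ p * ((ballSet S s).ncard / (ballSet S c).ncard) * ballAverage S (diffEnergy f p) s := by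
  have hc : ∀ ξ ∈ (hS.ballSet_finite c).toFinset, wordLength S ξ ≤ c := fun ξ hξ => by
    simpa [ballSet] using hξ
  have hsub : (hS.ballSet_finite c).toFinset ⊆ (hS.ballSet_finite s).toFinset := fun ξ hξ => by
    simpa [ballSet] using (hc ξ hξ).trans (by omega)
  have hz' : ∀ ξ ∈ (hS.ballSet_finite c).toFinset, ξ⁻¹ * z ∈ (hS.ballSet_finite s).toFinset :=
    fun ξ hξ => by
      have := (hS.wordLength_mul_le ξ⁻¹ z).trans (add_le_add (hS.wordLength_inv_le ξ) hz)
      simpa [ballSet] using this.trans (by have := hc ξ hξ; omega)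
  have hcard := card_mul_diffEnergy_le hf hp hsub hz'
  rw [← Set.ncard_eq_toFinset_card _ (hS.ballSet_finite c),
    hS.sum_eq_ncard_mul_ballAverage _ (Nat.cast_nonneg s)] at hcard
  have := hS.ncard_ballSet_pos (Nat.cast_nonneg (α := ℝ) c)
  rw [mul_div_assoc', div_mul_eq_mul_div, le_div_iff₀ (by positivity)]
  linarith

theorem ballAverage_diffEnergy_le (hS : IsSymmetricGenerating S) {f : G → ℝ} {p : ℝ}
    (hf : (Function.support f).Finite) (hp : 1 ≤ p) {r a c s K : ℕ} (hr : r ≤ K * a)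
    (has : a + c ≤ s) :
    ballAverage S (diffEnergy f p) r ≤
      (2 * K) ^ p * ((ballSet S s).ncard / (ballSet S c).ncard) *
        ballAverage S (diffEnergy f p) s := by
  rw [Real.mul_rpow zero_le_two (Nat.cast_nonneg K)]
  refine hS.ballAverage_le (Nat.cast_nonneg r) fun y hy => ?_
  obtain ⟨L, rfl, hL, rfl⟩ := hS.exists_list_prod_eq_of_wordLength_le_mul
    ((show wordLength S y ≤ r by simpa [ballSet] using hy).trans hr)
  refine (diffEnergy_list_prod_le hf hp ?_ fun z hz =>
    hS.diffEnergy_le_of_wordLength_le hf hp has (hL z hz)).trans_eq (by ring)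
  have := ballAverage_nonneg S (diffEnergy_nonneg f p) s
  positivity

theorem ncard_ballSet_div_le_of_doubling
    (hS : IsSymmetricGenerating S) {C_D : ℝ} (hdoub : ∀ r : ℝ, 1 ≤ r →
      (((ballSet S (2 * r)).ncard : ℝ)) ≤ C_D * ((ballSet S r).ncard : ℝ))
    {s : ℕ} (hs : 1 ≤ s) :
    ((ballSet S s).ncard : ℝ) / (ballSet S (s / 2 : ℕ)).ncard ≤
      C_D ^ 2 + (ballSet S 1).ncard := by
  have hpos : ∀ t : ℝ, 0 ≤ t → (0 : ℝ) < (ballSet S t).ncard := fun t ht => by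
    exact_mod_cast hS.ncard_ballSet_pos ht
  have hC_D : 0 ≤ C_D := by
    have := hdoub 1 le_rfl
    nlinarith [hpos 1 zero_le_one, hpos (2 * 1) (by norm_num)]
  rw [div_le_iff₀ (hpos _ (Nat.cast_nonneg _))]
  rcases Nat.lt_or_ge s 2 with hs2 | hs2
  · obtain rfl : s = 1 := by omega
    have : (1 : ℝ) ≤ (ballSet S ((1 / 2 : ℕ) : ℝ)).ncard := by
      exact_mod_cast hpos _ (Nat.cast_nonneg _)
    push_cast
    nlinarith [sq_nonneg C_D, hpos 1 zero_le_one]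
  · set c : ℝ := ((s / 2 : ℕ) : ℝ)
    have hc : 1 ≤ c := by simp only [c]; exact_mod_cast (by omega : 1 ≤ s / 2)
    have hsc : (s : ℝ) ≤ 2 * (2 * c) := by
      simp only [c]; exact_mod_cast (by omega : s ≤ 2 * (2 * (s / 2)))
    have h₁ : ((ballSet S s).ncard : ℝ) ≤ (ballSet S (2 * (2 * c))).ncard := by
      exact_mod_cast hS.ncard_ballSet_mono hsc
    have h₂ := hdoub (2 * c) (by linarith)
    have h₃ := hdoub c hc
    nlinarith [mul_le_mul_of_nonneg_left h₃ hC_D, hpos 1 zero_le_one, hpos c (by linarith)]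

end IsSymmetricGenerating

end

theorem moving_average_pseudo_poincare_general {G : Type*} [Group G]
    (S : Finset G) (hsym : ∀ s ∈ S, s⁻¹ ∈ S)
    (hgen : Subgroup.closure (S : Set G) = ⊤)
    (C_D : ℝ) (hdoub : ∀ r : ℝ, 1 ≤ r →
      (((ballSet S (2 * r)).ncard : ℝ)) ≤ C_D * ((ballSet S r).ncard : ℝ))
    (p : ℝ) (hp : 1 ≤ p) :
    ∃ C > (0:ℝ), ∀ r s : ℕ, 1 ≤ s → s < r → ∀ f : G → ℝ,
      (Function.support f).Finite →
      (∑' x : G, ∑' y : G, |f (x * y) - f x| ^ p * unifBall S (r : ℝ) y) ≤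
        C * ((r : ℝ) / (s : ℝ)) ^ p *
          ∑' x : G, ∑' y : G, |f (x * y) - f x| ^ p * unifBall S (s : ℝ) y := by
  have hS : IsSymmetricGenerating S := ⟨hsym, hgen⟩
  have hB1 : (0 : ℝ) < (ballSet S 1).ncard := by exact_mod_cast hS.ncard_ballSet_pos zero_le_one
  refine ⟨8 ^ p * (C_D ^ 2 + (ballSet S 1).ncard), by positivity, fun r s hs hsr f hf => ?_⟩
  have hp0 : p ≠ 0 := by positivity
  rw [tsum_tsum_mul_unifBall_eq hf hp0 (hS.ballSet_finite r),
    tsum_tsum_mul_unifBall_eq hf hp0 (hS.ballSet_finite s)]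
  set a := s - s / 2 with ha
  set K := r / a + 1
  have hr : r ≤ K * a := by rw [mul_comm]; exact (Nat.lt_mul_div_succ r (by omega)).le
  have hK : (2 * K : ℝ) ≤ 8 * (r / s) := by
    rw [mul_div_assoc', le_div_iff₀ (by positivity)]
    have := Nat.div_mul_le_self r a
    have : s ≤ 2 * a := by omega
    have : a ≤ s := by omega
    exact_mod_cast (by nlinarith : 2 * (r / a + 1) * s ≤ 8 * r)
  have hE := ballAverage_nonneg S (diffEnergy_nonneg f p) s
  calc _ ≤ _ := hS.ballAverage_diffEnergy_le hf hp hr (by omega : a + s / 2 ≤ s)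
    _ ≤ (8 * (r / s)) ^ p * (C_D ^ 2 + (ballSet S 1).ncard) *
          ballAverage S (diffEnergy f p) s := by
        gcongr
        exact hS.ncard_ballSet_div_le_of_doubling hdoub hs
    _ = _ := by rw [Real.mul_rpow (by norm_num) (by positivity)]; ring

/-- Moving-average pseudo-Poincaré inequality on groups of polynomial growth
(volume doubling): for each `p ≥ 1` there is `C(G,p)` such that for all integers
`r > s ≥ 1` and all finitely supported `f`,
`Σ_{x,y}|f(xy)−f(x)|^p u_r(y) ≤ C·(r/s)^p·Σ_{x,y}|f(xy)−f(x)|^p u_s(y)`. -/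
theorem moving_average_pseudo_poincare {G : Type*} [Group G]
    (S : Finset G) (hone : (1 : G) ∈ S) (hsym : ∀ s ∈ S, s⁻¹ ∈ S)
    (hgen : Subgroup.closure (S : Set G) = ⊤)
    (C_D : ℝ) (hdoub : ∀ r : ℝ, 1 ≤ r →
      (((ballSet S (2 * r)).ncard : ℝ)) ≤ C_D * ((ballSet S r).ncard : ℝ))
    (p : ℝ) (hp : 1 ≤ p) :
    ∃ C > (0:ℝ), ∀ r s : ℕ, 1 ≤ s → s < r → ∀ f : G → ℝ,
      (Function.support f).Finite →
      (∑' x : G, ∑' y : G, |f (x * y) - f x| ^ p * unifBall S (r : ℝ) y) ≤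
        C * ((r : ℝ) / (s : ℝ)) ^ p *
          ∑' x : G, ∑' y : G, |f (x * y) - f x| ^ p * unifBall S (s : ℝ) y :=
  moving_average_pseudo_poincare_general S hsym hgen C_D hdoub p hp
end
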